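/- arXiv:2509.07241 — 10 statements merged into one kernel-verified Lean document; each statement's English description precedes it below -/
import Mathlib

section
/- Let (F, θ) be a pointed endofunctor on a category C and (E, M) a prefactorization system on C such that every component θ_C factors as θ_C = μ_C ∘ η_C with η_C ∈ E and μ_C ∈ M, and let (I, η) be the induced pointed endofunctor. If every η_C : C → I(C) is an epimorphism in C, then (I, η) is well-pointed, i.e. Iη = ηI (for every object C, I(η_C) = η_{I(C)}). -/
open CategoryTheory CategoryTheory.Limits

universe v u

/-- `e` is orthogonal to `m`: every commutative square `u ≫ m = e ≫ v`
admits a unique diagonal `w` with `e ≫ w = u` and `w ≫ m = v`. -/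
def Orth {C : Type u} [Category.{v} C] {X Y A B : C} (e : X ⟶ Y) (m : A ⟶ B) : Prop :=
  ∀ (u : X ⟶ A) (v : Y ⟶ B), u ≫ m = e ≫ v → ∃! w : Y ⟶ A, e ≫ w = u ∧ w ≫ m = v

/-- A prefactorization system `(E, M)` on a category `C`: `E` consists exactly of the
morphisms left orthogonal to every morphism of `M`, and `M` consists exactly of the
morphisms right orthogonal to every morphism of `E`. -/
structure Prefactorization (C : Type u) [Category.{v} C] where
  E : MorphismProperty C
  M : MorphismProperty C
  E_iff : ∀ {X Y : C} (e : X ⟶ Y), E e ↔ ∀ {A B : C} (m : A ⟶ B), M m → Orth e m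
  M_iff : ∀ {A B : C} (m : A ⟶ B), M m ↔ ∀ {X Y : C} (e : X ⟶ Y), E e → Orth e m

theorem stmt1_general {C : Type u} [Category.{v} C]
    (I : C ⥤ C) (η : 𝟭 C ⟶ I)
    (hepi : ∀ X : C, Epi (η.app X)) :
    ∀ X : C, I.map (η.app X) = η.app (I.obj X) := by
  intro X
  exact (cancel_epi (η.app X)).mp (η.naturality (η.app X)).symm

/-- Let `(F, θ)` be a pointed endofunctor, `(E, M)` a prefactorization system factorizing
each component `θ_C = μ_C ∘ η_C` with `η_C ∈ E`, `μ_C ∈ M`, and `(I, η)` the induced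
pointed endofunctor (with `μ : I → F` natural and `θ = μ ∘ η`). If every `η_C` is an
epimorphism, then `(I, η)` is well-pointed: `I(η_C) = η_{I(C)}` for every object `C`. -/
theorem stmt1 {C : Type u} [Category.{v} C] (F : C ⥤ C) (θ : 𝟭 C ⟶ F)
    (P : Prefactorization C)
    (I : C ⥤ C) (η : 𝟭 C ⟶ I) (μ : I ⟶ F)
    (hη : ∀ X : C, P.E (η.app X)) (hμ : ∀ X : C, P.M (μ.app X))
    (hfac : ∀ X : C, η.app X ≫ μ.app X = θ.app X)
    (hepi : ∀ X : C, Epi (η.app X)) :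
    ∀ X : C, I.map (η.app X) = η.app (I.obj X) :=
  stmt1_general I η hepi
end

section
/- A well-pointed endofunctor (I, η) on a category C (i.e. Iη = ηI) is idempotent — meaning ηI is an isomorphism, i.e. η_{I(C)} is an isomorphism for every object C — if and only if Fix(I, η) is a reflective full replete subcategory of C whose reflection has unit η, where Fix(I, η) is the full subcategory of C determined by all objects M for which η_M : M → I(M) is an isomorphism. -/
open CategoryTheory

universe v u

section PointedEndofunctor

variable {C : Type u} [Category.{v} C] {I : C ⥤ C} (η : 𝟭 C ⟶ I)

theorem existsUnique_factor_app_of_isIso {X M : C}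
    (hwp : I.map (η.app X) = η.app (I.obj X)) [IsIso (η.app M)] (f : X ⟶ M) :
    ∃! g : I.obj X ⟶ M, η.app X ≫ g = f := by
  refine ⟨I.map f ≫ inv (η.app M), by simp [← η.naturality_assoc], fun g hg => ?_⟩
  have hgη : g ≫ η.app M = I.map f := calc
    g ≫ η.app M = η.app (I.obj X) ≫ I.map g := η.naturality g
    _ = I.map (η.app X ≫ g) := by rw [← hwp, I.map_comp]
    _ = I.map f := by rw [hg]
  simp [← hgη]

end PointedEndofunctor

/-- A well-pointed endofunctor `(I, η)` (i.e. `Iη = ηI`) is idempotent — `η_{I(C)}` is an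
isomorphism for every object `C` — if and only if `Fix(I, η)` (the objects `M` with `η_M`
an isomorphism) is a reflective full replete subcategory of `C` with reflection unit `η`:
it is closed under isomorphic objects, each `I(C)` lies in it, and every `η_C` is universal
among morphisms from `C` to objects of `Fix(I, η)`. -/
theorem stmt2 {C : Type u} [Category.{v} C] (I : C ⥤ C) (η : 𝟭 C ⟶ I)
    (hwp : ∀ X : C, I.map (η.app X) = η.app (I.obj X)) :
    (∀ X : C, IsIso (η.app (I.obj X))) ↔
      ((∀ (M N : C), IsIso (η.app M) → (M ≅ N) → IsIso (η.app N)) ∧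
       (∀ X : C, IsIso (η.app (I.obj X)) ∧
          ∀ (M : C), IsIso (η.app M) → ∀ f : X ⟶ M,
            ∃! g : I.obj X ⟶ M, η.app X ≫ g = f)) :=
  ⟨fun hidem => ⟨fun _ _ hM e => (NatTrans.isIso_app_iff_of_iso η e).mp hM,
      fun X => ⟨hidem X, fun _ _ f => existsUnique_factor_app_of_isIso η (hwp X) f⟩⟩,
    fun h X => (h.2 X).1⟩
end

section
/- Let F ⊣ G be an adjunction F : C → X, G : X → C with unit θ : 1_C → GF, let (E, M) be a prefactorization system on C such that every component θ_C factors as θ_C = μ_C ∘ η_C with η_C ∈ E and μ_C ∈ M, and suppose every η_C is an epimorphism. Then the induced well-pointed endofunctor (I, η) is idempotent (η_{I(C)} is an isomorphism for all C); hence there is a reflection I ⊣ H : C → M(F), where H is the full inclusion of M(F) = Fix(I, η), and M(F) equals the full replete subcategory of C determined by the objects M such that θ_M : M → GF(M) belongs to M. Moreover F(η_C) is an isomorphism for every object C. -/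
/-!
Since `η_c ∈ E` and `θ_M ∈ M`, orthogonality lifts every `f : c ⟶ M` along `η_c`, uniquely
because `η_c` is epi; applied to `f = 𝟙` this makes `η_M` split mono, hence invertible, whenever
`θ_M ∈ M`. Transposing `η_c ≫ μ_c = θ_c` across the adjunction shows that `F(η_c)` is split mono,
and it is epi as the image of an epi under a left adjoint, so it is invertible. Naturality of `θ`
then gives `θ_{I c} = μ_c ≫ G F(η_c)`, which lies in `M` because `M` is closed under composition
with isomorphisms; hence `η_{I c}` is invertible.
-/

open CategoryTheory CategoryTheory.Limits

universe v u

namespace Orth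

variable {C : Type u} [Category.{v} C] {X Y A B : C} {e : X ⟶ Y} {m : A ⟶ B}

lemma iso_comp {A' : C} (i : A' ⟶ A) [IsIso i] (h : Orth e m) : Orth e (i ≫ m) := by
  intro u v huv
  obtain ⟨w, ⟨hw₁, hw₂⟩, hw⟩ := h (u ≫ i) v (by rwa [Category.assoc])
  refine ⟨w ≫ inv i, ⟨by simp [reassoc_of% hw₁], by simp [hw₂]⟩, ?_⟩
  rintro y ⟨hy₁, hy₂⟩
  rw [← hw (y ≫ i) ⟨by rw [reassoc_of% hy₁], by simpa using hy₂⟩]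
  simp

lemma comp_iso {B' : C} (i : B ⟶ B') [IsIso i] (h : Orth e m) : Orth e (m ≫ i) := by
  intro u v huv
  obtain ⟨w, ⟨hw₁, hw₂⟩, hw⟩ := h u (v ≫ inv i) (by rw [← cancel_mono i]; simpa using huv)
  refine ⟨w, ⟨hw₁, by simp [reassoc_of% hw₂]⟩, fun y ⟨hy₁, hy₂⟩ => hw y ⟨hy₁, ?_⟩⟩
  simp [← hy₂]

lemma existsUnique_of_epi [Epi e] (h : Orth e m) {u : X ⟶ A} {v : Y ⟶ B}
    (huv : u ≫ m = e ≫ v) : ∃! w : Y ⟶ A, e ≫ w = u := by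
  obtain ⟨w, ⟨hw₁, -⟩, -⟩ := h u v huv
  exact ⟨w, hw₁, fun y hy => (cancel_epi e).1 (hy.trans hw₁.symm)⟩

end Orth

namespace Prefactorization

variable {C : Type u} [Category.{v} C] (P : Prefactorization C) {A B : C} {m : A ⟶ B}

lemma M_iso_comp {A' : C} (i : A' ⟶ A) [IsIso i] (hm : P.M m) : P.M (i ≫ m) :=
  (P.M_iff _).2 fun e he => ((P.M_iff m).1 hm e he).iso_comp i

lemma M_comp_iso {B' : C} (i : B ⟶ B') [IsIso i] (hm : P.M m) : P.M (m ≫ i) :=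
  (P.M_iff _).2 fun e he => ((P.M_iff m).1 hm e he).comp_iso i

end Prefactorization

universe v' u'

namespace CategoryTheory.Adjunction

variable {C : Type u} [Category.{v} C] {X : Type u'} [Category.{v'} X]
  {F : C ⥤ X} {G : X ⥤ C} (adj : F ⊣ G) {c d : C} {e : c ⟶ d} {m : d ⟶ G.obj (F.obj c)}

lemma isIso_map_of_comp_eq_unit [Epi e] (h : e ≫ m = adj.unit.app c) : IsIso (F.map e) := by
  have : F.PreservesEpimorphisms := F.preservesEpimorphisms_of_adjunction adj
  have : IsSplitMono (F.map e) := IsSplitMono.mk'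
    ⟨F.map m ≫ adj.counit.app (F.obj c), by
      rw [← F.map_comp_assoc, h]
      exact adj.left_triangle_components c⟩
  exact isIso_of_epi_of_isSplitMono _

lemma unit_app_eq_of_comp_eq_unit [Epi e] (h : e ≫ m = adj.unit.app c) :
    adj.unit.app d = m ≫ G.map (F.map e) := by
  rw [← cancel_epi e, ← Category.assoc, h]
  exact (adj.unit_naturality e).symm

lemma existsUnique_factor_of_comp_eq_unit [Epi e] (h : e ≫ m = adj.unit.app c) {M₀ : C}
    (he : Orth e (adj.unit.app M₀)) (f : c ⟶ M₀) : ∃! g : d ⟶ M₀, e ≫ g = f := by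
  refine he.existsUnique_of_epi (v := m ≫ G.map (F.map f)) ?_
  rw [← Category.assoc, h]
  exact (adj.unit_naturality f).symm

lemma unit_app_mem_iff_isIso (P : Prefactorization C) (he : P.E e) (hm : P.M m) [Epi e]
    (h : e ≫ m = adj.unit.app c) : P.M (adj.unit.app c) ↔ IsIso e := by
  refine ⟨fun hθ => ?_, fun _ => h ▸ P.M_iso_comp e hm⟩
  obtain ⟨r, hr, -⟩ :=
    adj.existsUnique_factor_of_comp_eq_unit h ((P.E_iff e).1 he _ hθ) (𝟙 c)
  have : IsSplitMono e := IsSplitMono.mk' ⟨r, hr⟩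
  exact isIso_of_epi_of_isSplitMono e

end CategoryTheory.Adjunction

/-- Let `F ⊣ G` be an adjunction with unit `θ`, `(E, M)` a prefactorization system on `C`
factorizing each `θ_C = μ_C ∘ η_C` with `η_C ∈ E` and `μ_C ∈ M` (giving the induced
pointed endofunctor `(I, η)` with `μ : I → F ⋙ G` natural and `θ = μ ∘ η`), and suppose
every `η_C` is an epimorphism. Then `(I, η)` is idempotent (`η_{I(C)}` is iso for all `C`),
`η_C : C → I(C)` is universal among morphisms into the full subcategory
`M(F) = {M | θ_M ∈ M}` (so there is a reflection `I ⊣ H : C → M(F)`),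
`M(F)` coincides with `Fix(I, η)`, and every `F(η_C)` is an isomorphism. -/
theorem stmt3 {C : Type u} [Category.{v} C] {X : Type u'} [Category.{v'} X]
    (F : C ⥤ X) (G : X ⥤ C) (adj : F ⊣ G)
    (P : Prefactorization C)
    (I : C ⥤ C) (η : 𝟭 C ⟶ I) (μ : I ⟶ F ⋙ G)
    (hη : ∀ c : C, P.E (η.app c)) (hμ : ∀ c : C, P.M (μ.app c))
    (hfac : ∀ c : C, η.app c ≫ μ.app c = adj.unit.app c)
    (hepi : ∀ c : C, Epi (η.app c)) :
    (∀ c : C, IsIso (η.app (I.obj c))) ∧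
    (∀ (c M₀ : C), P.M (adj.unit.app M₀) →
      ∀ f : c ⟶ M₀, ∃! g : I.obj c ⟶ M₀, η.app c ≫ g = f) ∧
    (∀ M₀ : C, P.M (adj.unit.app M₀) ↔ IsIso (η.app M₀)) ∧
    (∀ c : C, IsIso (F.map (η.app c))) := by
  have hfix (c : C) : P.M (adj.unit.app c) ↔ IsIso (η.app c) :=
    adj.unit_app_mem_iff_isIso P (hη c) (hμ c) (hfac c)
  refine ⟨fun c => ?idempotent, fun c M₀ hM f => ?universal, hfix,
    fun c => adj.isIso_map_of_comp_eq_unit (hfac c)⟩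
  case idempotent =>
    have : IsIso (F.map (η.app c)) := adj.isIso_map_of_comp_eq_unit (hfac c)
    rw [← hfix, adj.unit_app_eq_of_comp_eq_unit (hfac c)]
    exact P.M_comp_iso _ (hμ c)
  case universal =>
    exact adj.existsUnique_factor_of_comp_eq_unit (hfac c) ((P.E_iff _).1 (hη c) _ hM) f
end

section
/- Let F ⊣ G be an adjunction F : C → X with unit θ : 1_C → GF on a category C with pullbacks, (E, M) a prefactorization system on C factorizing each θ_C = μ_C ∘ η_C with η_C ∈ E an epimorphism and μ_C ∈ M, and let I ⊣ H : C → M(F) be the induced reflection with unit η. If (a) GF preserves every pullback of a diagram A → I(C) ← C whose right leg is the unit η_C : C → I(C), and (b) η_C ∈ E′ for every object C, where E′ is the largest subclass of E stable under pullback, then the reflection I ⊣ H has stable units. -/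
/-!
Pulling back the unit `η_c` along `g : A ⟶ I c` gives `p : P' ⟶ A`, which lies in `E` by (b).
Since `G F` preserves this pullback by (a), the unit `θ_{P'}` extends along `p` to a map
`A ⟶ G F P'`; orthogonality of `p` against `μ_{P'}` and `μ_A` turns this into `s : A ⟶ I P'`
with `p ≫ s = η_{P'}` and `s ≫ I p = η_A`. As `(I, η)` is idempotent (`η_{I x}` is an epi in `E`
through which `μ_x ∈ M` factors, hence an iso), `I p` is invertible, and so is `I η_c`. A
commutative square whose vertical sides are isomorphisms is a pullback.
-/

open CategoryTheory CategoryTheory.Limits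

universe v u

universe v' u'

theorem Prefactorization.orth {C : Type u} [Category.{v} C] (P : Prefactorization C)
    {X Y A B : C} {e : X ⟶ Y} {m : A ⟶ B} (he : P.E e) (hm : P.M m) : Orth e m :=
  (P.E_iff e).mp he m hm

/-- The diagonal of the square `𝟙 ≫ m = e ≫ w` is a retraction of `e`, hence its inverse. -/
theorem Prefactorization.isIso_of_epi_of_comp_eq {C : Type u} [Category.{v} C]
    (P : Prefactorization C) {X Y B : C} {e : X ⟶ Y} {m : X ⟶ B} (he : P.E e) [Epi e]
    (hm : P.M m) {w : Y ⟶ B} (hw : e ≫ w = m) : IsIso e := by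
  obtain ⟨r, ⟨her, -⟩, -⟩ := P.orth he hm (𝟙 X) w (by rw [Category.id_comp, hw])
  refine ⟨r, her, ?_⟩
  rw [← cancel_epi e, reassoc_of% her, Category.comp_id]

section PointedEndofunctor

variable {C : Type u} [Category.{v} C] {I : C ⥤ C} (η : 𝟭 C ⟶ I)

theorem map_app_eq_app_obj_of_epi (x : C) [Epi (η.app x)] :
    I.map (η.app x) = η.app (I.obj x) :=
  (cancel_epi (η.app x)).mp (η.naturality (η.app x)).symm

theorem isIso_map_of_comp_eq_app (hepi : ∀ x, Epi (η.app x))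
    (hiso : ∀ x, IsIso (η.app (I.obj x))) {Y A : C} {p : Y ⟶ A} {s : A ⟶ I.obj Y}
    (hps : p ≫ s = η.app Y) (hsp : s ≫ I.map p = η.app A) : IsIso (I.map p) := by
  refine ⟨I.map s ≫ inv (η.app (I.obj Y)), ?_, ?_⟩
  · rw [← I.map_comp_assoc, hps, map_app_eq_app_obj_of_epi, IsIso.hom_inv_id]
  · have hnat : inv (η.app (I.obj Y)) ≫ I.map p = I.map (I.map p) ≫ inv (η.app (I.obj A)) := by
      rw [IsIso.inv_comp_eq, ← η.naturality_assoc, Functor.id_map, IsIso.hom_inv_id,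
        Category.comp_id]
    rw [Category.assoc, hnat, ← I.map_comp_assoc, hsp, map_app_eq_app_obj_of_epi,
      IsIso.hom_inv_id]

end PointedEndofunctor

section UnitFactorization

variable {C : Type u} [Category.{v} C] {X : Type u'} [Category.{v'} X]
  {F : C ⥤ X} {G : X ⥤ C} {adj : F ⊣ G} {P : Prefactorization C}
  {I : C ⥤ C} {η : 𝟭 C ⟶ I} {μ : I ⟶ F ⋙ G}

/-- `μ_x` factors through `η_{I x}` via `μ_{I x}` followed by `G F μ_x` and the counit. -/
theorem isIso_app_obj_of_unit_fac (hη : ∀ c : C, P.E (η.app c))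
    (hμ : ∀ c : C, P.M (μ.app c)) (hfac : ∀ c : C, η.app c ≫ μ.app c = adj.unit.app c)
    (hepi : ∀ c : C, Epi (η.app c)) (x : C) : IsIso (η.app (I.obj x)) := by
  refine P.isIso_of_epi_of_comp_eq (hη _) (hμ x)
    (w := μ.app (I.obj x) ≫ G.map (F.map (μ.app x) ≫ adj.counit.app (F.obj x))) ?_
  have hnat := adj.unit.naturality (μ.app x)
  simp only [Functor.id_map, Functor.comp_map] at hnat
  rw [reassoc_of% hfac (I.obj x), G.map_comp, ← reassoc_of% hnat,
    adj.right_triangle_components, Category.comp_id]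

theorem exists_comp_eq_unit_of_isPullback (hfac : ∀ c : C, η.app c ≫ μ.app c = adj.unit.app c)
    {c Y A : C} [Epi (η.app c)] {g : A ⟶ I.obj c} {q : Y ⟶ c} {p : Y ⟶ A}
    (hpb : IsPullback q p (η.app c) g)
    (hGF : IsPullback ((F ⋙ G).map q) ((F ⋙ G).map p) ((F ⋙ G).map (η.app c))
      ((F ⋙ G).map g)) :
    ∃ v : A ⟶ (F ⋙ G).obj Y, p ≫ v = adj.unit.app Y ∧ v ≫ (F ⋙ G).map p = adj.unit.app A := by
  have hcone : (g ≫ μ.app c) ≫ (F ⋙ G).map (η.app c) = adj.unit.app A ≫ (F ⋙ G).map g := by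
    rw [Category.assoc, ← μ.naturality, map_app_eq_app_obj_of_epi η c, hfac (I.obj c)]
    exact adj.unit.naturality g
  refine ⟨hGF.lift _ _ hcone, hGF.hom_ext ?_ ?_, hGF.lift_snd _ _ _⟩
  · rw [Category.assoc, hGF.lift_fst, ← reassoc_of% hpb.w, hfac c]
    exact adj.unit.naturality q
  · rw [Category.assoc, hGF.lift_snd]
    exact adj.unit.naturality p

/-- Both `η_A` and `s ≫ I p` are diagonals of the square `(p ≫ η_A) ≫ μ_A = p ≫ θ_A`. -/
theorem exists_comp_eq_app_of_comp_eq_unit (hμ : ∀ c : C, P.M (μ.app c))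
    (hfac : ∀ c : C, η.app c ≫ μ.app c = adj.unit.app c) {Y A : C} {p : Y ⟶ A} (hp : P.E p)
    {v : A ⟶ (F ⋙ G).obj Y} (hpv : p ≫ v = adj.unit.app Y)
    (hvp : v ≫ (F ⋙ G).map p = adj.unit.app A) :
    ∃ s : A ⟶ I.obj Y, p ≫ s = η.app Y ∧ s ≫ I.map p = η.app A := by
  obtain ⟨s, ⟨hps, hsμ⟩, -⟩ := P.orth hp (hμ Y) (η.app Y) v (by rw [hfac, hpv])
  obtain ⟨_, -, huniq⟩ := P.orth hp (hμ A) (p ≫ η.app A) (adj.unit.app A)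
    (by rw [Category.assoc, hfac])
  refine ⟨s, hps, ?_⟩
  have hdiag : p ≫ s ≫ I.map p = p ≫ η.app A ∧ (s ≫ I.map p) ≫ μ.app A = adj.unit.app A :=
    ⟨by rw [reassoc_of% hps]; exact (η.naturality p).symm,
      by rw [Category.assoc, μ.naturality, reassoc_of% hsμ, hvp]⟩
  rw [huniq _ hdiag, huniq _ ⟨rfl, hfac A⟩]

end UnitFactorization

/-- Let `F ⊣ G` be an adjunction with unit `θ` on a category `C` with pullbacks,
`(E, M)` a prefactorization system factorizing each `θ_C = μ_C ∘ η_C` with `η_C ∈ E`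
an epimorphism and `μ_C ∈ M`, and `(I, η)` the induced reflection data. If
(a) `G ∘ F` preserves every pullback of a cospan `A ⟶ I(C) ⟵ C` whose right leg is the
unit `η_C`, and (b) every `η_C` lies in `E′`, the largest pullback-stable subclass of `E`,
then the reflection has stable units: `I` preserves every such pullback. -/
theorem stmt4 {C : Type u} [Category.{v} C] [HasPullbacks C]
    {X : Type u'} [Category.{v'} X]
    (F : C ⥤ X) (G : X ⥤ C) (adj : F ⊣ G)
    (P : Prefactorization C)
    (I : C ⥤ C) (η : 𝟭 C ⟶ I) (μ : I ⟶ F ⋙ G)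
    (hη : ∀ c : C, P.E (η.app c)) (hμ : ∀ c : C, P.M (μ.app c))
    (hfac : ∀ c : C, η.app c ≫ μ.app c = adj.unit.app c)
    (hepi : ∀ c : C, Epi (η.app c))
    (ha : ∀ (c : C) {P' A : C} (g : A ⟶ I.obj c) (q : P' ⟶ c) (p : P' ⟶ A),
      IsPullback q p (η.app c) g →
      IsPullback ((F ⋙ G).map q) ((F ⋙ G).map p) ((F ⋙ G).map (η.app c)) ((F ⋙ G).map g))
    (hb : ∀ (c : C) {P' A : C} (q : P' ⟶ c) (p : P' ⟶ A) (g : A ⟶ I.obj c),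
      IsPullback q p (η.app c) g → P.E p) :
    ∀ (c : C) {P' A : C} (g : A ⟶ I.obj c) (q : P' ⟶ c) (p : P' ⟶ A),
      IsPullback q p (η.app c) g →
      IsPullback (I.map q) (I.map p) (I.map (η.app c)) (I.map g) := by
  intro c Y A g q p hpb
  have hiso := isIso_app_obj_of_unit_fac hη hμ hfac hepi
  obtain ⟨v, hpv, hvp⟩ := exists_comp_eq_unit_of_isPullback hfac hpb (ha c g q p hpb)
  obtain ⟨s, hps, hsp⟩ := exists_comp_eq_app_of_comp_eq_unit hμ hfac (hb c q p g hpb) hpv hvp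
  have : IsIso (I.map p) := isIso_map_of_comp_eq_app η hepi hiso hps hsp
  have : IsIso (I.map (η.app c)) := by
    rw [map_app_eq_app_obj_of_epi]
    exact hiso c
  exact IsPullback.of_vert_isIso (I.map_commSq hpb.toCommSq)
end

section
/- Let F ⊣ G be an adjunction F : C → X with unit θ : 1_C → GF on a category C with pullbacks, (E, M) a prefactorization system on C factorizing each θ_C = μ_C ∘ η_C with η_C ∈ E an epimorphism and μ_C ∈ M, and let I ⊣ H : C → M(F) be the induced reflection. If the reflection I ⊣ H has stable units, then GF preserves every pullback of a diagram A → I(C) ← C whose right leg is the unit η_C : C → I(C). -/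
open CategoryTheory CategoryTheory.Limits

universe v u

universe v' u'

/-!
Since `θ_C = μ_C ∘ η_C` with `η_C` epi, `F` inverts every `η_C`: the adjunct of `μ_C` is a
retraction of `F η_C`, which is epi as `F` is a left adjoint. Orthogonality of `η_{IC}`
against `μ_C` makes `η_{IC} = I η_C` an isomorphism, so by stable units the pullback `p` of
`η_C` is inverted by `I`, hence by `F` through the naturality square of `η` at `p`. The
square `GF(pullback)` then has two parallel sides invertible, so it is a pullback.
-/

theorem Orth.isIso_of_epi {C : Type u} [Category.{v} C] {A B D : C} {e : A ⟶ B} {m : A ⟶ D}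
    (h : Orth e m) [Epi e] (v : B ⟶ D) (hv : e ≫ v = m) : IsIso e := by
  obtain ⟨w, ⟨hw, -⟩, -⟩ := h (𝟙 A) v (by rw [Category.id_comp, hv])
  have : IsSplitMono e := IsSplitMono.mk' ⟨w, hw⟩
  exact isIso_of_epi_of_isSplitMono e

theorem CategoryTheory.Adjunction.isIso_map_of_comp_eq_unit_s5 {C : Type u} [Category.{v} C]
    {X : Type u'} [Category.{v'} X] {F : C ⥤ X} {G : X ⥤ C} (adj : F ⊣ G)
    {A B : C} (f : A ⟶ B) [Epi f] (h : B ⟶ G.obj (F.obj A)) (hf : f ≫ h = adj.unit.app A) :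
    IsIso (F.map f) := by
  have : F.PreservesEpimorphisms := Functor.preservesEpimorphisms_of_adjunction adj
  have : IsSplitMono (F.map f) := IsSplitMono.mk' ⟨F.map h ≫ adj.counit.app (F.obj A), by
    rw [← Category.assoc, ← F.map_comp, hf, adj.left_triangle_components]⟩
  exact isIso_of_epi_of_isSplitMono _

theorem map_app_eq_app_obj_of_epi_s5 {C : Type u} [Category.{v} C] {I : C ⥤ C} {η : 𝟭 C ⟶ I}
    (hepi : ∀ c : C, Epi (η.app c)) (c : C) : I.map (η.app c) = η.app (I.obj c) :=
  (hepi c).left_cancellation _ _ (η.naturality (η.app c)).symm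

theorem isIso_app_obj_of_factorization {C : Type u} [Category.{v} C]
    {X : Type u'} [Category.{v'} X] {F : C ⥤ X} {G : X ⥤ C} (adj : F ⊣ G)
    {I : C ⥤ C} {η : 𝟭 C ⟶ I} {μ : I ⟶ F ⋙ G} (P : Prefactorization C)
    (hη : ∀ c : C, P.E (η.app c)) (hμ : ∀ c : C, P.M (μ.app c))
    (hfac : ∀ c : C, η.app c ≫ μ.app c = adj.unit.app c) (hepi : ∀ c : C, Epi (η.app c))
    (c : C) : IsIso (η.app (I.obj c)) := by
  have := hepi (I.obj c)
  refine Orth.isIso_of_epi ((P.E_iff _).mp (hη _) _ (hμ c))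
    (μ.app (I.obj c) ≫ G.map (F.map (μ.app c) ≫ adj.counit.app (F.obj c))) ?_
  rw [← Category.assoc, hfac]
  simp

theorem stmt5_general {C : Type u} [Category.{v} C]
    {X : Type u'} [Category.{v'} X]
    (F : C ⥤ X) (G : X ⥤ C) (adj : F ⊣ G)
    (P : Prefactorization C)
    (I : C ⥤ C) (η : 𝟭 C ⟶ I) (μ : I ⟶ F ⋙ G)
    (hη : ∀ c : C, P.E (η.app c)) (hμ : ∀ c : C, P.M (μ.app c))
    (hfac : ∀ c : C, η.app c ≫ μ.app c = adj.unit.app c)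
    (hepi : ∀ c : C, Epi (η.app c))
    (hsu : ∀ (c : C) {P' A : C} (g : A ⟶ I.obj c) (q : P' ⟶ c) (p : P' ⟶ A),
      IsPullback q p (η.app c) g →
      IsPullback (I.map q) (I.map p) (I.map (η.app c)) (I.map g)) :
    ∀ (c : C) {P' A : C} (g : A ⟶ I.obj c) (q : P' ⟶ c) (p : P' ⟶ A),
      IsPullback q p (η.app c) g →
      IsPullback ((F ⋙ G).map q) ((F ⋙ G).map p) ((F ⋙ G).map (η.app c)) ((F ⋙ G).map g) := by
  intro c P' A g q p hpb
  have (a : C) : IsIso (F.map (η.app a)) :=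
    have := hepi a
    adj.isIso_map_of_comp_eq_unit_s5 _ (μ.app a) (hfac a)
  have : IsIso (I.map (η.app c)) := by
    rw [map_app_eq_app_obj_of_epi_s5 hepi]
    exact isIso_app_obj_of_factorization adj P hη hμ hfac hepi c
  have : IsIso (I.map p) := (hsu c g q p hpb).isIso_snd_of_isIso
  have : IsIso (F.map p) := by
    have hnat : p ≫ η.app A = η.app P' ≫ I.map p := η.naturality p
    have : IsIso (F.map p ≫ F.map (η.app A)) := by
      rw [← F.map_comp, hnat, F.map_comp]
      infer_instance
    exact IsIso.of_isIso_comp_right _ (F.map (η.app A))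
  have : IsIso ((F ⋙ G).map p) := G.map_isIso (F.map p)
  have : IsIso ((F ⋙ G).map (η.app c)) := G.map_isIso (F.map (η.app c))
  exact IsPullback.of_vert_isIso ⟨by simp only [← Functor.map_comp, hpb.w]⟩

/-- Let `F ⊣ G` be an adjunction with unit `θ` on a category `C` with pullbacks,
`(E, M)` a prefactorization system factorizing each `θ_C = μ_C ∘ η_C` with `η_C ∈ E`
an epimorphism and `μ_C ∈ M`, and `(I, η)` the induced reflection data. If the
reflection has stable units (`I` preserves every pullback of a cospan `A ⟶ I(C) ⟵ C`
whose right leg is the unit `η_C`), then `G ∘ F` preserves every such pullback. -/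
theorem stmt5 {C : Type u} [Category.{v} C] [HasPullbacks C]
    {X : Type u'} [Category.{v'} X]
    (F : C ⥤ X) (G : X ⥤ C) (adj : F ⊣ G)
    (P : Prefactorization C)
    (I : C ⥤ C) (η : 𝟭 C ⟶ I) (μ : I ⟶ F ⋙ G)
    (hη : ∀ c : C, P.E (η.app c)) (hμ : ∀ c : C, P.M (μ.app c))
    (hfac : ∀ c : C, η.app c ≫ μ.app c = adj.unit.app c)
    (hepi : ∀ c : C, Epi (η.app c))
    (hsu : ∀ (c : C) {P' A : C} (g : A ⟶ I.obj c) (q : P' ⟶ c) (p : P' ⟶ A),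
      IsPullback q p (η.app c) g →
      IsPullback (I.map q) (I.map p) (I.map (η.app c)) (I.map g)) :
    ∀ (c : C) {P' A : C} (g : A ⟶ I.obj c) (q : P' ⟶ c) (p : P' ⟶ A),
      IsPullback q p (η.app c) g →
      IsPullback ((F ⋙ G).map q) ((F ⋙ G).map p) ((F ⋙ G).map (η.app c)) ((F ⋙ G).map g) :=
  stmt5_general F G adj P I η μ hη hμ hfac hepi hsu
end

section
/- Let F ⊣ G be an adjunction F : C → X with unit θ : 1_C → GF, and let N be a full subcategory of C whose set of objects is a generating set for C. Then the unit morphism θ_N : N → GF(N) is a monomorphism for every object N of N if and only if the restriction of the left adjoint F to N is faithful. -/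
open CategoryTheory

universe v u v' u'

/-- `F.map h` corresponds to `h ≫ adj.unit.app B` under the adjunction bijection. -/
lemma CategoryTheory.Adjunction.map_eq_map_iff_comp_unit_eq {C : Type u} [Category.{v} C]
    {X : Type u'} [Category.{v'} X] {F : C ⥤ X} {G : X ⥤ C} (adj : F ⊣ G) {A B : C}
    (h h' : A ⟶ B) :
    F.map h = F.map h' ↔ h ≫ adj.unit.app B = h' ≫ adj.unit.app B := by
  rw [← (adj.homEquiv A (F.obj B)).apply_eq_iff_eq, adj.homEquiv_unit, adj.homEquiv_unit,
    adj.unit_naturality, adj.unit_naturality]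

lemma CategoryTheory.ObjectProperty.isSeparating_of_exists_comp_ne {C : Type u}
    [Category.{v} C] (N : Set C)
    (hgen : ∀ {A B : C} (f f' : A ⟶ B), f ≠ f' → ∃ n ∈ N, ∃ g : n ⟶ A, g ≫ f ≠ g ≫ f') :
    ObjectProperty.IsSeparating (· ∈ N) := by
  intro A B f f' hcomp
  by_contra hne
  obtain ⟨n, hn, g, hg⟩ := hgen f f' hne
  exact hg (hcomp n hn g)

/-- Let `F ⊣ G` be an adjunction with unit `θ` and `N` a set of objects of `C` which is
a generating set. Then every unit morphism `θ_n` with `n ∈ N` is a monomorphism if and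
only if the restriction of the left adjoint `F` to the full subcategory on `N` is
faithful (injective on each hom-set between objects of `N`). -/
theorem stmt7 {C : Type u} [Category.{v} C] {X : Type u'} [Category.{v'} X]
    (F : C ⥤ X) (G : X ⥤ C) (adj : F ⊣ G)
    (N : Set C)
    (hgen : ∀ {A B : C} (f f' : A ⟶ B), f ≠ f' → ∃ n ∈ N, ∃ g : n ⟶ A, g ≫ f ≠ g ≫ f') :
    (∀ n ∈ N, Mono (adj.unit.app n)) ↔
      ∀ n ∈ N, ∀ n' ∈ N, Function.Injective (fun g : n ⟶ n' => F.map g) := by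
  constructor
  · intro hmono n _ n' hn' g g' hFg
    have := hmono n' hn'
    exact (cancel_mono _).mp ((adj.map_eq_map_iff_comp_unit_eq g g').mp hFg)
  · intro hfaithful n hn
    rw [(ObjectProperty.isSeparating_of_exists_comp_ne N hgen).mono_iff]
    intro m hm g g' hunit
    exact hfaithful m hm n hn ((adj.map_eq_map_iff_comp_unit_eq g g').mpr hunit)
end

section
/- Let D be a small category, C = Set^{D^op} the category of presheaves on D, and F ⊣ G an adjunction F : Set^{D^op} → X with unit θ. If the composite F ∘ y of F with the Yoneda embedding y : D → Set^{D^op} is faithful, and the right adjoint G preserves coproducts, then for every family (D_i)_{i∈I} of objects of D, the unit morphism θ at the coproduct ∐_{i∈I} D(−, D_i) of representable presheaves is a monomorphism in Set^{D^op}. -/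
/-!
Componentwise, the unit at a representable `y c` sends `g : d ⟶ c` to the transpose of
`F (y g)`, so it is mono as soon as `F ∘ y` is faithful. Since `F` (a left adjoint) and `G`
preserve coproducts, the unit at `∐ Yᵢ` is, up to the comparison isomorphism
`∐ GF Yᵢ ≅ GF (∐ Yᵢ)`, the coproduct of the units at the `Yᵢ`, and coproducts of monos are
mono in a presheaf category.
-/

open CategoryTheory CategoryTheory.Limits

universe u v' u'

namespace CategoryTheory.Adjunction

variable {C : Type*} [Category* C] {X : Type*} [Category* X] {F : C ⥤ X} {G : X ⥤ C}

lemma unit_app_sigma (adj : F ⊣ G) {ι : Type*} (Y : ι → C) [HasCoproduct Y]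
    [HasCoproduct fun i => (F ⋙ G).obj (Y i)] :
    adj.unit.app (∐ Y) =
      Limits.Sigma.map (f := Y) (g := fun i => (F ⋙ G).obj (Y i)) (fun i => adj.unit.app (Y i)) ≫
        sigmaComparison (F ⋙ G) Y := by
  refine Sigma.hom_ext _ _ fun i => ?_
  rw [Sigma.ι_map_assoc, ι_comp_sigmaComparison]
  exact (adj.unit_naturality _).symm

lemma mono_unit_app_sigma (adj : F ⊣ G) {ι : Type*} [HasCoproductsOfShape ι C]
    [PreservesColimitsOfShape (Discrete ι) G]
    [(MorphismProperty.monomorphisms C).IsStableUnderCoproductsOfShape ι]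
    (Y : ι → C) [∀ i, Mono (adj.unit.app (Y i))] : Mono (adj.unit.app (∐ Y)) := by
  have : PreservesColimitsOfShape (Discrete ι) F :=
    adj.leftAdjoint_preservesColimits.preservesColimitsOfShape
  rw [adj.unit_app_sigma]
  infer_instance

lemma mono_unit_app_yoneda_obj {C : Type*} [Category.{u} C] {X : Type*} [Category* X]
    {F : (Cᵒᵖ ⥤ Type u) ⥤ X} {G : X ⥤ Cᵒᵖ ⥤ Type u} (adj : F ⊣ G) [(yoneda ⋙ F).Faithful]
    (c : C) : Mono (adj.unit.app (yoneda.obj c)) := by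
  rw [NatTrans.mono_iff_mono_app]
  intro d
  rw [mono_iff_injective]
  have unit_app_eq (f : d.unop ⟶ c) : (adj.unit.app (yoneda.obj c)).app d f =
      yonedaEquiv (adj.homEquiv _ _ (F.map (yoneda.map f))) := by
    rw [adj.homEquiv_unit, adj.unit_naturality, yonedaEquiv_comp, yonedaEquiv_yoneda_map]
  intro f g hfg
  rw [unit_app_eq, unit_app_eq] at hfg
  exact (yoneda ⋙ F).map_injective ((adj.homEquiv _ _).injective (yonedaEquiv.injective hfg))

end CategoryTheory.Adjunction

/-- Let `D` be a small category, `C = Set^{Dᵒᵖ}` the category of presheaves on `D`, and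
`F ⊣ G` an adjunction with unit `θ`. If `F ∘ y` is faithful (`y` the Yoneda embedding)
and `G` preserves coproducts, then for every family `(D_i)` of objects of `D` the unit
morphism at the coproduct `∐ᵢ D(−, D_i)` of representables is a monomorphism. -/
theorem stmt9 {D : Type u} [SmallCategory D] {X : Type u'} [Category.{v'} X]
    (F : (Dᵒᵖ ⥤ Type u) ⥤ X) (G : X ⥤ Dᵒᵖ ⥤ Type u) (adj : F ⊣ G)
    (hfaithful : (yoneda ⋙ F).Faithful)
    (hG : ∀ ι' : Type u, PreservesColimitsOfShape (Discrete ι') G)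
    {ι : Type u} (Di : ι → D) :
    Mono (adj.unit.app (∐ fun i => yoneda.obj (Di i))) := by
  have := hG ι
  have (i : ι) : Mono (adj.unit.app (yoneda.obj (Di i))) := adj.mono_unit_app_yoneda_obj (Di i)
  exact adj.mono_unit_app_sigma _
end

section
/- Let J be a small pseudo-filtered category (every connected component of J is filtered) and M : J → Set a functor. Then every component θ_{M,j} : M(j) → Colim(M) of the colimit cocone of M is injective if and only if M(u) : M(j) → M(j′) is injective for every morphism u : j → j′ of J. -/
/-!
In a category whose connected components are filtered, every span `j ← i → j'` can be completed
to a commutative square and every parallel pair can be coequalized, computing inside the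
component. These are exactly the facts the usual description of filtered colimits of types uses,
so two elements `x, y ∈ M(j)` have the same image in `Colim M` iff `M(f) x = M(f) y` for some
`f : j ⟶ k`. If all `M(u)` are injective this forces `x = y`; conversely
`θ_{M,j} = θ_{M,j'} ∘ M(u)`, so injectivity of `θ_{M,j}` gives that of `M(u)`.
-/

open CategoryTheory CategoryTheory.Limits

universe u

namespace CategoryTheory

def IsPseudoFiltered (J : Type*) [Category J] : Prop :=
  ∀ c : ConnectedComponents J, IsFiltered c.Component

namespace IsPseudoFiltered

variable {J : Type*} [Category J]

lemma span (hJ : IsPseudoFiltered J) {i j j' : J} (f : i ⟶ j) (f' : i ⟶ j') :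
    ∃ (k : J) (g : j ⟶ k) (g' : j' ⟶ k), f ≫ g = f' ≫ g' := by
  let c := ConnectedComponents.mk i
  have := hJ c
  obtain ⟨k, g, g', h⟩ := IsFiltered.span
    (ObjectProperty.homMk f : (⟨i, rfl⟩ : c.Component) ⟶ ⟨j, Quotient.sound' (Zigzag.of_inv f)⟩)
    (ObjectProperty.homMk f' : (⟨i, rfl⟩ : c.Component) ⟶ ⟨j', Quotient.sound' (Zigzag.of_inv f')⟩)
  exact ⟨k.obj, g.hom, g'.hom, congrArg InducedCategory.Hom.hom h⟩

lemma exists_coeq (hJ : IsPseudoFiltered J) {j k : J} (f g : j ⟶ k) :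
    ∃ (l : J) (w : k ⟶ l), f ≫ w = g ≫ w := by
  let c := ConnectedComponents.mk j
  have := hJ c
  let f' : (⟨j, rfl⟩ : c.Component) ⟶ ⟨k, Quotient.sound' (Zigzag.of_inv f)⟩ :=
    ObjectProperty.homMk f
  let g' : (⟨j, rfl⟩ : c.Component) ⟶ ⟨k, Quotient.sound' (Zigzag.of_inv f)⟩ :=
    ObjectProperty.homMk g
  exact ⟨_, (IsFiltered.coeqHom f' g').hom,
    congrArg InducedCategory.Hom.hom (IsFiltered.coeq_condition f' g')⟩

end IsPseudoFiltered

lemma Functor.eqvGen_colimitTypeRel_iff_of_isPseudoFiltered {J : Type*} [Category J]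
    (hJ : IsPseudoFiltered J) (F : J ⥤ Type*) (x y : (j : J) × F.obj j) :
    Relation.EqvGen F.ColimitTypeRel x y ↔
      ∃ (k : J) (f : x.1 ⟶ k) (g : y.1 ⟶ k), F.map f x.2 = F.map g y.2 := by
  constructor
  · intro h
    induction h with
    | rel x y h =>
      obtain ⟨f, h⟩ := h
      exact ⟨y.1, f, 𝟙 _, by simpa using h.symm⟩
    | refl x => exact ⟨x.1, 𝟙 _, 𝟙 _, rfl⟩
    | symm _ _ _ h =>
      obtain ⟨k, f, g, h⟩ := h
      exact ⟨k, g, f, h.symm⟩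
    | trans x y z _ _ h h' =>
      obtain ⟨k, f, g, h⟩ := h
      obtain ⟨k', f', g', h'⟩ := h'
      obtain ⟨l, a, b, hab⟩ := hJ.span g f'
      refine ⟨l, f ≫ a, g' ≫ b, ?_⟩
      rw [F.map_comp, F.map_comp, types_comp_apply, types_comp_apply, h, ← h',
        ← types_comp_apply (F.map g), ← types_comp_apply (F.map f'), ← F.map_comp, ← F.map_comp,
        hab]
  · rintro ⟨k, f, g, h⟩
    exact .trans _ ⟨k, F.map f x.2⟩ _ (.rel _ _ ⟨f, rfl⟩) (.symm _ _ (.rel _ _ ⟨g, h⟩))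

lemma Types.colimit_ι_eq_iff_of_isPseudoFiltered {J : Type u} [SmallCategory J]
    (hJ : IsPseudoFiltered J) (F : J ⥤ Type u) {j : J} (x y : F.obj j) :
    colimit.ι F j x = colimit.ι F j y ↔ ∃ (k : J) (f : j ⟶ k), F.map f x = F.map f y := by
  constructor
  · intro hxy
    obtain ⟨k, f, g, hfg⟩ :=
      (F.eqvGen_colimitTypeRel_iff_of_isPseudoFiltered hJ _ _).1 (Types.colimit_eq hxy)
    obtain ⟨l, w, hw⟩ := hJ.exists_coeq f g
    refine ⟨l, f ≫ w, ?_⟩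
    nth_rw 2 [hw]
    rw [F.map_comp, F.map_comp, types_comp_apply, types_comp_apply, hfg]
  · rintro ⟨k, f, h⟩
    exact Types.colimit_sound' f f h

end CategoryTheory

/-- Let `J` be a small pseudo-filtered category (every connected component of `J` is
filtered) and `M : J ⥤ Set` a functor. Then every component `θ_{M,j} : M(j) → Colim M`
of the colimit cocone of `M` is injective if and only if `M(u)` is injective for every
morphism `u` of `J`. -/
theorem stmt14 {J : Type u} [SmallCategory J]
    (hpf : ∀ c : ConnectedComponents J, IsFiltered (ConnectedComponents.Component c))
    (M : J ⥤ Type u) :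
    (∀ j : J, Function.Injective (colimit.ι M j)) ↔
      ∀ {j j' : J} (u : j ⟶ j'), Function.Injective (M.map u) := by
  constructor
  · intro h j j' u
    have hι : colimit.ι M j' ∘ M.map u = colimit.ι M j := funext (colimit.w_apply M u)
    exact Function.Injective.of_comp (f := colimit.ι M j') (hι ▸ h j)
  · intro h j x y hxy
    obtain ⟨k, f, hf⟩ := (Types.colimit_ι_eq_iff_of_isPseudoFiltered hpf M x y).1 hxy
    exact h f hf
end

section
/- Let J be a small pseudo-filtered category (every connected component of J is filtered). Then the colimit functor Colim : Set^J → Set preserves pullbacks. -/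
open CategoryTheory CategoryTheory.Limits

universe u

/-!
When every connected component of `J` is filtered, spans in `J` can be completed to commutative
squares and parallel pairs can be coequalized. As for filtered colimits, this makes equality in a
colimit of types "eventual equality": `colimit.ι F i x = colimit.ι F j y` iff `x` and `y` have
equal images at some common later stage. Since pullbacks in `J ⥤ Type u` are pointwise, both
injectivity and surjectivity of `colim (X ×_Z Y) → colim X ×_{colim Z} colim Y` reduce to
pushing representatives to a single stage and using the pullback property there.
-/

namespace CategoryTheory

section PseudoFiltered

variable {J : Type*} [Category* J] (hJ : ∀ c : ConnectedComponents J, IsFiltered c.Component)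
include hJ

lemma span_of_isFiltered_component {i j j' : J} (f : i ⟶ j) (f' : i ⟶ j') :
    ∃ (k : J) (g : j ⟶ k) (g' : j' ⟶ k), f ≫ g = f' ≫ g' := by
  have := hJ (ConnectedComponents.mk i)
  obtain ⟨k, g, g', h⟩ := IsFiltered.span (C := (ConnectedComponents.mk i).Component)
    (i := ⟨i, rfl⟩) (j := ⟨j, Quotient.sound' (Zigzag.of_inv f)⟩)
    (j' := ⟨j', Quotient.sound' (Zigzag.of_inv f')⟩)
    (ObjectProperty.homMk f) (ObjectProperty.homMk f')
  exact ⟨k.obj, g.hom, g'.hom, congrArg InducedCategory.Hom.hom h⟩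

lemma cocone_maps_of_isFiltered_component {j k : J} (f g : j ⟶ k) :
    ∃ (l : J) (h : k ⟶ l), f ≫ h = g ≫ h := by
  have := hJ (ConnectedComponents.mk k)
  obtain ⟨l, h, hh⟩ := IsFilteredOrEmpty.cocone_maps (C := (ConnectedComponents.mk k).Component)
    (X := ⟨j, Quotient.sound' (Zigzag.of_hom f)⟩) (Y := ⟨k, rfl⟩)
    (ObjectProperty.homMk f) (ObjectProperty.homMk g)
  exact ⟨l.obj, h.hom, congrArg InducedCategory.Hom.hom hh⟩

lemma Limits.Types.FilteredColimit.rel_equiv_of_isFiltered_component (F : J ⥤ Type*) :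
    _root_.Equivalence (Types.FilteredColimit.Rel F) where
  refl x := ⟨x.1, 𝟙 x.1, 𝟙 x.1, rfl⟩
  symm := fun ⟨k, f, g, h⟩ => ⟨k, g, f, h.symm⟩
  trans {x y z} := fun ⟨k, f, g, h⟩ ⟨k', f', g', h'⟩ => by
    obtain ⟨l, a, b, hab⟩ := span_of_isFiltered_component hJ g f'
    refine ⟨l, f ≫ a, g' ≫ b, ?_⟩
    calc F.map (f ≫ a) x.2 = F.map a (F.map g y.2) := by simp [← h]
      _ = F.map b (F.map f' y.2) := by simp only [← Functor.map_comp_apply, hab]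
      _ = F.map (g' ≫ b) z.2 := by simp [h']

lemma Limits.Types.FilteredColimit.colimit_eq_iff_of_isFiltered_component (F : J ⥤ Type*)
    [HasColimit F] {i j : J} {xi : F.obj i} {xj : F.obj j} :
    colimit.ι F i xi = colimit.ι F j xj ↔
      ∃ (k : J) (f : i ⟶ k) (g : j ⟶ k), F.map f xi = F.map g xj :=
  ⟨fun h => (rel_equiv_of_isFiltered_component hJ F).eqvGen_iff.1
      (Relation.EqvGen.mono (rel_of_colimitTypeRel F) _ _ (Types.colimit_eq h)),
    fun ⟨_, f, g, h⟩ => Types.colimit_sound' f g h⟩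

lemma Limits.Types.FilteredColimit.exists_map_eq_of_colimit_ι_eq_of_isFiltered_component
    (F : J ⥤ Type*) [HasColimit F] {j : J} {x y : F.obj j}
    (h : colimit.ι F j x = colimit.ι F j y) :
    ∃ (k : J) (a : j ⟶ k), F.map a x = F.map a y := by
  obtain ⟨k, f, g, hfg⟩ := (colimit_eq_iff_of_isFiltered_component hJ F).1 h
  obtain ⟨l, r, hr⟩ := cocone_maps_of_isFiltered_component hJ f g
  exact ⟨l, f ≫ r, by rw [Functor.map_comp_apply, hfg, ← Functor.map_comp_apply, ← hr]⟩

open Types.FilteredColimit in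
lemma isPullback_colim_map_of_isFiltered_component [HasColimitsOfShape J (Type u)]
    {P X Y Z : J ⥤ Type u} {fst : P ⟶ X} {snd : P ⟶ Y} {f : X ⟶ Z} {g : Y ⟶ Z}
    (h : IsPullback fst snd f g) :
    IsPullback (colim.map fst) (colim.map snd) (colim.map f) (colim.map g) := by
  rw [Types.isPullback_iff]
  refine ⟨by rw [← colim.map_comp, h.w, colim.map_comp], ?_, ?_⟩
  · rintro x y ⟨hfst, hsnd⟩
    obtain ⟨i, p, rfl⟩ := Types.jointly_surjective' x
    obtain ⟨j, q, rfl⟩ := Types.jointly_surjective' y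
    simp only [colim_map, colimit.ι_map_apply] at hfst hsnd
    obtain ⟨k, a, b, hab⟩ := (colimit_eq_iff_of_isFiltered_component hJ X).1 hfst
    rw [← colimit.w_apply Y a, ← colimit.w_apply Y b] at hsnd
    obtain ⟨l, c, hc⟩ := exists_map_eq_of_colimit_ι_eq_of_isFiltered_component hJ Y hsnd
    refine Types.colimit_sound' (a ≫ c) (b ≫ c) (Types.ext_of_isPullback (h.app l) ?_ ?_)
    · simp only [NatTrans.naturality_apply, Functor.map_comp_apply, hab]
    · simp only [NatTrans.naturality_apply, Functor.map_comp_apply, hc]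
  · intro x₂ x₃ hx
    obtain ⟨i, a, rfl⟩ := Types.jointly_surjective' x₂
    obtain ⟨j, b, rfl⟩ := Types.jointly_surjective' x₃
    simp only [colim_map, colimit.ι_map_apply] at hx
    obtain ⟨k, s, t, hst⟩ := (colimit_eq_iff_of_isFiltered_component hJ Z).1 hx
    obtain ⟨p, hp₁, hp₂⟩ := Types.exists_of_isPullback (h.app k) (X.map s a) (Y.map t b)
      (by simpa only [NatTrans.naturality_apply] using hst)
    exact ⟨colimit.ι P k p, by simp [hp₁], by simp [hp₂]⟩

end PseudoFiltered

end CategoryTheory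

/-- If `J` is a small pseudo-filtered category (every connected component of `J` is
filtered), then the colimit functor `Colim : Set^J ⥤ Set` preserves pullbacks. -/
theorem stmt15 {J : Type u} [SmallCategory J]
    (hpf : ∀ c : ConnectedComponents J, IsFiltered (ConnectedComponents.Component c)) :
    PreservesLimitsOfShape WalkingCospan (colim : (J ⥤ Type u) ⥤ Type u) :=
  preservesLimitsOfShape_walkingCospan_of_forall_isPullback fun _ _ _ f g _ =>
    ⟨pullback f g, pullback.fst f g, pullback.snd f g, .of_hasPullback f g,
      isPullback_colim_map_of_isFiltered_component hpf (.of_hasPullback f g)⟩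
end

section
/- Let K : B → A be a functor with B small and A having small hom-sets, and consider the adjunction Set^K ⊣ Ran_K : Set^B → Set^A given by right Kan extensions computed as pointwise limits, with unit θ. Factorizing each unit morphism θ_S : S → Ran_K(SK) componentwise through its (surjection, injection)-factorization yields a full reflection with stable units H ⊣ I : Set^A → Mono(Set^K), where Mono(Set^K) is the full subcategory of Set^A of functors S for which θ_S is a monomorphism. Moreover, Set^K ∘ y is faithful (equivalently, every representable functor A(A, −) belongs to Mono(Set^K)) if and only if K(ob B), the set of objects of A in the image of K, is a cogenerating set for A, where y : A^op → Set^A is the Yoneda embedding. -/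
open CategoryTheory CategoryTheory.Limits

/-!
By Yoneda, `θ_S(x)` for `x ∈ S(a)` is the transpose under the adjunction of the restriction
along `K` of the map `A(a, -) ⟶ S` classifying `x`. Hence `θ_S` identifies `x` and `x'` exactly
when `S(h) x = S(h) x'` for all `h : a ⟶ K(b)`, and the image of `θ_S` is the quotient of `S` by
this relation, a construction not involving `Ran_K`. The relation is equality on the objects
`K(b)`, so the quotient is separated (its unit is mono), and the reflector inverts both the unit
`S ⟶ I(S)` and its pullbacks, giving a pullback square with two parallel isomorphisms. For a
representable `A(a, -)` the relation reads `f ≫ h = g ≫ h` for all `h` into some `K(b)`, which is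
the cogenerating condition.
-/

universe u u₁ u₂ w v₁

namespace CategoryTheory.Functor

variable {B : Type u₁} [Category.{v₁} B] {A : Type u₂} [Category.{u} A] (K : B ⥤ A)

def Indistinguishable (S : A ⥤ Type w) {a : A} (x x' : S.obj a) : Prop :=
  ∀ (b : B) (h : a ⟶ K.obj b), S.map h x = S.map h x'

def indistinguishableSetoid (S : A ⥤ Type w) (a : A) : Setoid (S.obj a) where
  r := K.Indistinguishable S
  iseqv :=
    { refl _ _ _ := rfl
      symm hxy b h := (hxy b h).symm
      trans hxy hyz b h := (hxy b h).trans (hyz b h) }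

def IsSeparated (S : A ⥤ Type w) : Prop :=
  ∀ ⦃a : A⦄ ⦃x x' : S.obj a⦄, K.Indistinguishable S x x' → x = x'

variable {K}

namespace Indistinguishable

variable {S S' : A ⥤ Type w} {a : A} {x x' : S.obj a}

lemma map {a' : A} (hx : K.Indistinguishable S x x') (h : a ⟶ a') :
    K.Indistinguishable S (S.map h x) (S.map h x') := fun b h' => by
  simpa only [Functor.map_comp_apply] using hx b (h ≫ h')

lemma app (hx : K.Indistinguishable S x x') (f : S ⟶ S') :
    K.Indistinguishable S' (f.app a x) (f.app a x') := fun b h => by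
  simp only [← NatTrans.naturality_apply, hx b h]

lemma eq {b : B} {y y' : S.obj (K.obj b)} (hy : K.Indistinguishable S y y') : y = y' := by
  simpa using hy b (𝟙 _)

end Indistinguishable

variable (K)

def separatedQuotientObj (S : A ⥤ Type w) : A ⥤ Type w where
  obj a := _root_.Quotient (K.indistinguishableSetoid S a)
  map h := TypeCat.ofHom (_root_.Quotient.map (S.map h) fun _ _ hx => Indistinguishable.map hx h)
  map_id a := by ext ⟨x⟩; exact congrArg _ (S.map_id_apply a x)
  map_comp h h' := by ext ⟨x⟩; exact congrArg _ (S.map_comp_apply h h' x)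

def separatedQuotient : (A ⥤ Type w) ⥤ (A ⥤ Type w) where
  obj := K.separatedQuotientObj
  map f :=
    { app a := TypeCat.ofHom (_root_.Quotient.map (f.app a) fun _ _ hx => hx.app f)
      naturality a a' h := by ext ⟨x⟩; exact congrArg _ (NatTrans.naturality_apply f h x) }
  map_id S := by ext a ⟨x⟩; rfl
  map_comp f g := by ext a ⟨x⟩; rfl

def toSeparatedQuotient : 𝟭 (A ⥤ Type w) ⟶ K.separatedQuotient where
  app S := { app a := TypeCat.ofHom (_root_.Quotient.mk _) }

variable {K}

lemma toSeparatedQuotient_app_app_surjective (S : A ⥤ Type w) (a : A) :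
    Function.Surjective ((K.toSeparatedQuotient.app S).app a) :=
  _root_.Quotient.mk_surjective

instance (S : A ⥤ Type w) : Epi (K.toSeparatedQuotient.app S) :=
  have := fun a => (epi_iff_surjective _).2 (toSeparatedQuotient_app_app_surjective (K := K) S a)
  NatTrans.epi_of_epi_app _

lemma indistinguishable_mk_iff {S : A ⥤ Type w} {a : A} {x x' : S.obj a} :
    K.Indistinguishable (K.separatedQuotientObj S) ⟦x⟧ ⟦x'⟧ ↔ K.Indistinguishable S x x' :=
  ⟨fun hx b h => (_root_.Quotient.exact (hx b h)).eq,
    fun hx _ h => _root_.Quotient.sound (hx.map h)⟩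

lemma isSeparated_separatedQuotientObj (S : A ⥤ Type w) :
    K.IsSeparated (K.separatedQuotientObj S) := by
  rintro a ⟨x⟩ ⟨x'⟩ hx
  exact _root_.Quotient.sound (indistinguishable_mk_iff.1 hx)

lemma IsSeparated.existsUnique_lift {S M : A ⥤ Type w} (hM : K.IsSeparated M) (f : S ⟶ M) :
    ∃! g : K.separatedQuotient.obj S ⟶ M, K.toSeparatedQuotient.app S ≫ g = f := by
  refine ⟨{ app a := TypeCat.ofHom (_root_.Quotient.lift (f.app a) fun _ _ hx => hM (hx.app f))
            naturality a a' h := by ext ⟨x⟩; exact NatTrans.naturality_apply f h x }, rfl, ?_⟩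
  intro g hg
  rw [← cancel_epi (K.toSeparatedQuotient.app S), hg]
  rfl

lemma isIso_separatedQuotient_map {S S' : A ⥤ Type w} {f : S ⟶ S'}
    (hsurj : ∀ a, Function.Surjective (f.app a))
    (hreflect : ∀ a (x x' : S.obj a),
      K.Indistinguishable S' (f.app a x) (f.app a x') → K.Indistinguishable S x x') :
    IsIso (K.separatedQuotient.map f) := by
  refine @NatIso.isIso_of_isIso_app _ _ _ _ _ _ _ fun a => (isIso_iff_bijective _).2 ⟨?_, ?_⟩
  · rintro ⟨x⟩ ⟨x'⟩ hx
    exact _root_.Quotient.sound (hreflect a x x' (_root_.Quotient.exact hx))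
  · rintro ⟨y⟩
    obtain ⟨x, rfl⟩ := hsurj a y
    exact ⟨⟦x⟧, rfl⟩

lemma isIso_separatedQuotient_map_toSeparatedQuotient (S : A ⥤ Type w) :
    IsIso (K.separatedQuotient.map (K.toSeparatedQuotient.app S)) :=
  isIso_separatedQuotient_map (toSeparatedQuotient_app_app_surjective S)
    fun _ _ _ => indistinguishable_mk_iff.1

lemma isPullback_separatedQuotient_map {S P X : A ⥤ Type w} {g : X ⟶ K.separatedQuotient.obj S}
    {q : P ⟶ S} {p : P ⟶ X} (hpb : IsPullback q p (K.toSeparatedQuotient.app S) g) :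
    IsPullback (K.separatedQuotient.map q) (K.separatedQuotient.map p)
      (K.separatedQuotient.map (K.toSeparatedQuotient.app S)) (K.separatedQuotient.map g) := by
  have hpb_app (a : A) : IsPullback (q.app a) (p.app a) ((K.toSeparatedQuotient.app S).app a)
      (g.app a) := hpb.map ((evaluation A (Type w)).obj a)
  have hp_surj (a : A) : Function.Surjective (p.app a) := fun y => by
    obtain ⟨x, hx⟩ := toSeparatedQuotient_app_app_surjective S a (g.app a y)
    obtain ⟨w, -, hw⟩ := Types.exists_of_isPullback (hpb_app a) x y hx
    exact ⟨w, hw⟩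
  have hp_reflect (a : A) (w w' : P.obj a)
      (hw : K.Indistinguishable X (p.app a w) (p.app a w')) : K.Indistinguishable P w w' := by
    intro b h
    refine Types.ext_of_isPullback (hpb_app _) ?_ ?_
    · -- `η` is injective on `S (K b)`, and the square identifies `η ∘ q` with `g ∘ p`
      have hgp (w₀ : P.obj a) : ⟦S.map h (q.app a w₀)⟧ = g.app _ (X.map h (p.app a w₀)) := by
        rw [← NatTrans.naturality_apply, ← NatTrans.naturality_apply]
        exact congrArg (fun φ => (φ.app _) (P.map h w₀)) hpb.w
      simp only [NatTrans.naturality_apply]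
      exact (_root_.Quotient.exact ((hgp w).trans ((congrArg _ (hw b h)).trans (hgp w').symm))).eq
    · simpa only [NatTrans.naturality_apply] using hw b h
  have := isIso_separatedQuotient_map (K := K) hp_surj hp_reflect
  have := isIso_separatedQuotient_map_toSeparatedQuotient (K := K) S
  exact (IsPullback.of_horiz_isIso ⟨by simp only [← Functor.map_comp, hpb.w]⟩).flip

open Opposite

section

variable {S : A ⥤ Type u} {a : A}

lemma whiskeringLeft_map_coyonedaEquiv_symm_eq_iff {x x' : S.obj a} :
    ((whiskeringLeft B A (Type u)).obj K).map (coyonedaEquiv.symm x) =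
        ((whiskeringLeft B A (Type u)).obj K).map (coyonedaEquiv.symm x') ↔
      K.Indistinguishable S x x' :=
  ⟨fun he b h => types_congr_hom (NatTrans.congr_app he b) h,
    fun hx => by ext b h; exact hx b h⟩

lemma faithful_coyoneda_comp_whiskeringLeft_iff :
    (coyoneda ⋙ (whiskeringLeft B A (Type u)).obj K).Faithful ↔
      ∀ a : A, K.IsSeparated (coyoneda.obj (op a)) := by
  refine ⟨fun hF a A₀ f g hfg => Quiver.Hom.op_inj (hF.map_injective ?_), fun hsep => ⟨?_⟩⟩
  · ext b h
    exact hfg b h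
  · intro _ _ φ ψ he
    exact Quiver.Hom.unop_inj (hsep _ fun b h => types_congr_hom (NatTrans.congr_app he b) h)

lemma forall_isSeparated_coyoneda_iff :
    (∀ a : A, K.IsSeparated (coyoneda.obj (op a))) ↔
      ∀ {A' A₀ : A} (f g : A' ⟶ A₀), f ≠ g → ∃ (b : B) (h : A₀ ⟶ K.obj b), f ≫ h ≠ g ≫ h := by
  refine ⟨fun hsep A' A₀ f g hfg => ?_, fun hcogen a A₀ f g hfg => ?_⟩
  · by_contra! hall
    exact hfg (hsep A' hall)
  · by_contra hne
    obtain ⟨b, h, hbh⟩ := hcogen f g hne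
    exact hbh (hfg b h)

variable {RanK : (B ⥤ Type u) ⥤ (A ⥤ Type u)} (adj : (whiskeringLeft B A (Type u)).obj K ⊣ RanK)
include adj

lemma unit_app_app_eq_iff {x x' : S.obj a} :
    (adj.unit.app S).app a x = (adj.unit.app S).app a x' ↔ K.Indistinguishable S x x' := by
  have hθ (y : S.obj a) : (adj.unit.app S).app a y = coyonedaEquiv
      (adj.homEquiv _ _ (((whiskeringLeft B A (Type u)).obj K).map (coyonedaEquiv.symm y))) := by
    rw [adj.homEquiv_unit, adj.unit_naturality, coyonedaEquiv_comp, Equiv.apply_symm_apply]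
  rw [hθ, hθ, coyonedaEquiv.apply_eq_iff_eq, Equiv.apply_eq_iff_eq,
    whiskeringLeft_map_coyonedaEquiv_symm_eq_iff]

lemma mono_unit_app_iff : Mono (adj.unit.app S) ↔ K.IsSeparated S := by
  simp only [NatTrans.mono_iff_mono_app, mono_iff_injective, Function.Injective,
    unit_app_app_eq_iff adj]
  exact Iff.rfl

def separatedQuotientToRan :
    K.separatedQuotient ⟶ (whiskeringLeft B A (Type u)).obj K ⋙ RanK where
  app S :=
    { app a := TypeCat.ofHom (_root_.Quotient.lift ((adj.unit.app S).app a)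
        fun _ _ => (unit_app_app_eq_iff adj).2)
      naturality a a' h := by ext ⟨x⟩; exact NatTrans.naturality_apply (adj.unit.app S) h x }
  naturality S S' f := by
    ext a ⟨x⟩
    exact types_congr_hom (NatTrans.congr_app (adj.unit.naturality f) a) x

lemma toSeparatedQuotient_comp_separatedQuotientToRan :
    K.toSeparatedQuotient ≫ separatedQuotientToRan adj = adj.unit :=
  rfl

instance (S : A ⥤ Type u) : Mono ((separatedQuotientToRan adj).app S) := by
  refine @NatTrans.mono_of_mono_app _ _ _ _ _ _ _ fun a => (mono_iff_injective _).2 ?_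
  rintro ⟨x⟩ ⟨x'⟩ hx
  exact _root_.Quotient.sound ((unit_app_app_eq_iff adj).1 hx)

end

end CategoryTheory.Functor

/-- Let `K : B ⥤ A` with `B` small and `A` with (`Type u`-valued) hom-sets, and
`Set^K ⊣ Ran_K` the adjunction given by right Kan extensions, with unit `θ`. Then:
(1) factorizing each unit morphism `θ_S` componentwise through its
(surjection, injection)-factorization (i.e. `θ = μ ∘ η` with each `η_S` epi and each
`μ_S` mono in `Set^A`) yields a full reflection `I ⊣ H : Set^A → Mono(Set^K)` — the
reflector lands in the full subcategory `Mono(Set^K) = {S | θ_S mono}` and each `η_S` is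
universal among morphisms into it — which has stable units (the reflector preserves
every pullback of a cospan `X ⟶ I(S) ⟵ S` whose right leg is the unit);
(2) `Set^K ∘ y` is faithful iff every representable `A(a, −)` lies in `Mono(Set^K)`,
iff `K(ob B)` is a cogenerating set for `A`. -/
theorem stmt18 {B : Type u₁} [SmallCategory B] {A : Type u₂} [Category.{u} A]
    (K : B ⥤ A)
    (RanK : (B ⥤ Type u) ⥤ (A ⥤ Type u))
    (adj : (Functor.whiskeringLeft B A (Type u)).obj K ⊣ RanK) :
    (∃ (R : (A ⥤ Type u) ⥤ (A ⥤ Type u)) (η : 𝟭 (A ⥤ Type u) ⟶ R)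
        (μ : R ⟶ (Functor.whiskeringLeft B A (Type u)).obj K ⋙ RanK),
      (∀ S : A ⥤ Type u, Epi (η.app S)) ∧
      (∀ S : A ⥤ Type u, Mono (μ.app S)) ∧
      (∀ S : A ⥤ Type u, η.app S ≫ μ.app S = adj.unit.app S) ∧
      (∀ S : A ⥤ Type u, Mono (adj.unit.app (R.obj S))) ∧
      (∀ (S M₀ : A ⥤ Type u), Mono (adj.unit.app M₀) →
        ∀ f : S ⟶ M₀, ∃! g : R.obj S ⟶ M₀, η.app S ≫ g = f) ∧
      (∀ (S : A ⥤ Type u) {P' X' : A ⥤ Type u}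
          (g : X' ⟶ R.obj S) (q : P' ⟶ S) (p : P' ⟶ X'),
        IsPullback q p (η.app S) g →
          IsPullback (R.map q) (R.map p) (R.map (η.app S)) (R.map g))) ∧
    (((coyoneda ⋙ (Functor.whiskeringLeft B A (Type u)).obj K).Faithful ↔
        ∀ a : A, Mono (adj.unit.app (coyoneda.obj (Opposite.op a)))) ∧
     ((coyoneda ⋙ (Functor.whiskeringLeft B A (Type u)).obj K).Faithful ↔
        ∀ {A' A₀ : A} (f g : A' ⟶ A₀), f ≠ g →
          ∃ (b : B) (h : A₀ ⟶ K.obj b), f ≫ h ≠ g ≫ h)) := by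
  open Functor in
  refine ⟨⟨K.separatedQuotient, K.toSeparatedQuotient, separatedQuotientToRan adj,
      inferInstance, inferInstance,
      fun S => NatTrans.congr_app (toSeparatedQuotient_comp_separatedQuotientToRan adj) S,
      fun S => (mono_unit_app_iff adj).2 (isSeparated_separatedQuotientObj S),
      fun S M hM f => ((mono_unit_app_iff adj).1 hM).existsUnique_lift f,
      fun S P X g q p hpb => isPullback_separatedQuotient_map hpb⟩, ?_, ?_⟩
  · rw [faithful_coyoneda_comp_whiskeringLeft_iff]
    exact forall_congr' fun a => (mono_unit_app_iff adj).symm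
  · rw [faithful_coyoneda_comp_whiskeringLeft_iff, forall_isSeparated_coyoneda_iff]
end
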